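/- If π(y) ∝ π_ref(y) exp(r(y)/β) with β > 0 and π_ref of full support on a finite set Y, then for any two responses C, R, the reward difference satisfies r(C) − r(R) = β[log(π(C)/π_ref(C)) − log(π(R)/π_ref(R))]; hence the Bradley–Terry preference probability equals σ(β·Δ(C,R)) where Δ is the log-likelihood-ratio margin. -/

import Mathlib

noncomputable def logistic (z : ℝ) : ℝ := 1 / (1 + Real.exp (-z))

/-!
Solving `π(y) = π_ref(y) exp(r(y)/β) / Z` for the reward gives
`r(y) = β log(π(y)/π_ref(y)) + β log Z`: the policy determines the reward up to the
additive constant `β log Z`, which cancels in every reward difference.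
-/

namespace Real

lemma log_div_sub_log_div_comm {a b c d : ℝ} (ha : a ≠ 0) (hb : b ≠ 0) (hc : c ≠ 0)
    (hd : d ≠ 0) : log (a / b) - log (c / d) = log (a / c) - log (b / d) := by
  rw [log_div ha hb, log_div hc hd, log_div ha hc, log_div hb hd]
  ring

end Real

lemma sum_mul_exp_pos {Y : Type*} [Fintype Y] {w f : Y → ℝ} (hw : ∀ y, 0 < w y) (y₀ : Y) :
    0 < ∑ z, w z * Real.exp (f z) :=
  Finset.sum_pos (fun z _ => mul_pos (hw z) (Real.exp_pos _)) ⟨y₀, Finset.mem_univ y₀⟩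

lemma eq_mul_log_div_add_of_eq_mul_exp_div {p w r β Z : ℝ} (hβ : β ≠ 0) (hw : w ≠ 0)
    (hZ : 0 < Z) (hp : p = w * Real.exp (r / β) / Z) :
    r = β * Real.log (p / w) + β * Real.log Z := by
  have hratio : p / w = Real.exp (r / β) / Z := by
    rw [hp, div_right_comm, mul_div_cancel_left₀ _ hw]
  rw [hratio, Real.log_div (Real.exp_ne_zero _) hZ.ne', Real.log_exp]
  field_simp
  ring

theorem dpo_implicit_reward_identity_general
    {Y : Type*} [Fintype Y] (πref : Y → ℝ) (r : Y → ℝ) (β : ℝ)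
    (hβ : 0 < β) (href : ∀ y, 0 < πref y)
    (π : Y → ℝ)
    (hπ : ∀ y, π y = πref y * Real.exp (r y / β) / ∑ z, πref z * Real.exp (r z / β))
    (C R : Y) :
    r C - r R = β * (Real.log (π C / πref C) - Real.log (π R / πref R)) ∧
    logistic (r C - r R) =
      logistic (β * (Real.log (π C / π R) - Real.log (πref C / πref R))) := by
  have hZ : 0 < ∑ z, πref z * Real.exp (r z / β) := sum_mul_exp_pos href C
  have hreward (y : Y) := eq_mul_log_div_add_of_eq_mul_exp_div hβ.ne' (href y).ne' hZ (hπ y)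
  have hmargin : r C - r R = β * (Real.log (π C / πref C) - Real.log (π R / πref R)) := by
    rw [hreward C, hreward R]
    ring
  have hπpos (y : Y) : 0 < π y := by
    rw [hπ y]
    exact div_pos (mul_pos (href y) (Real.exp_pos _)) hZ
  refine ⟨hmargin, ?_⟩
  rw [Real.log_div_sub_log_div_comm (hπpos C).ne' (hπpos R).ne' (href C).ne' (href R).ne', hmargin]

/-- if `π(y) ∝ π_ref(y) exp(r(y)/β)` with `β > 0` and `π_ref` of full
support on a finite set, then `r(C) - r(R) = β [log(π(C)/π_ref(C)) - log(π(R)/π_ref(R))]`,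
and the Bradley–Terry preference probability equals `σ(β Δ(C,R))` where
`Δ(C,R) = log(π(C)/π(R)) - log(π_ref(C)/π_ref(R))`. -/
theorem dpo_implicit_reward_identity
    {Y : Type*} [Fintype Y] [Nonempty Y] (πref : Y → ℝ) (r : Y → ℝ) (β : ℝ)
    (hβ : 0 < β) (href : ∀ y, 0 < πref y) (hrefsum : ∑ y, πref y = 1)
    (π : Y → ℝ)
    (hπ : ∀ y, π y = πref y * Real.exp (r y / β) / ∑ z, πref z * Real.exp (r z / β))
    (C R : Y) :
    r C - r R = β * (Real.log (π C / πref C) - Real.log (π R / πref R)) ∧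
    logistic (r C - r R) =
      logistic (β * (Real.log (π C / π R) - Real.log (πref C / πref R))) :=
  dpo_implicit_reward_identity_general πref r β hβ href π hπ C R
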